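/- arXiv:2605.30628 — 2 statements merged into one kernel-verified Lean document; each statement's English description precedes it below -/
import Mathlib

section
/- Let C ≥ 2, e_hard ∈ (0, 1], E > 0, and S, ε_seq with 0 < 1 − ε_seq ≤ S ≤ 1. Set τ = 1 − ((1 − ε_seq)/S)^(1/E) and assume 0 < τ < e_hard. If m ≥ 2 is a real number with m ≥ C^(1 − τ/e_hard), then the sequence-level target is met: (1 − e_res(m))^E · S ≥ 1 − ε_seq, where e_res(m) = (1 − min(1, log m / log C)) · e_hard. -/
/-- Log-head coverage of the top `m` of `C` ranked failure modes. -/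
noncomputable def Flog (m C : ℝ) : ℝ := min 1 (Real.log m / Real.log C)

/-- Residual per-hard-decision error rate after deploying the top-`m` library. -/
noncomputable def eres (m C ehard : ℝ) : ℝ := (1 - Flog m C) * ehard

/-- Composition of Proposition 2 with Regime (ii) of the sequence-level derivation
(Appendix A.3): a library of size `m ≥ C ^ (1 − τ/e_hard)`, where `τ` is the
per-hard-decision tolerance `1 − ((1 − ε_seq)/S) ^ (1/E)`, meets the
sequence-level target `(1 − e_res(m)) ^ E · S ≥ 1 − ε_seq`. -/
theorem sequence_level_budget (C ehard E S εseq τ m : ℝ)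
    (hC : 2 ≤ C) (hehard0 : 0 < ehard) (hehard1 : ehard ≤ 1)
    (hE : 0 < E) (hε : 0 < 1 - εseq) (hεS : 1 - εseq ≤ S) (hS1 : S ≤ 1)
    (hτ : τ = 1 - ((1 - εseq) / S) ^ (1 / E))
    (hτ0 : 0 < τ) (hτe : τ < ehard)
    (hm2 : 2 ≤ m) (hm : m ≥ C ^ (1 - τ / ehard)) :
    (1 - eres m C ehard) ^ E * S ≥ 1 - εseq := by
  have hC0 : (0:ℝ) < C := by linarith
  have hlogC : 0 < Real.log C := Real.log_pos (by linarith)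
  have hS0 : 0 < S := lt_of_lt_of_le hε hεS
  -- log m ≥ (1 - τ/ehard) * log C
  have hlogm : (1 - τ / ehard) * Real.log C ≤ Real.log m := by
    have := Real.log_le_log (Real.rpow_pos_of_pos hC0 _) hm
    rwa [Real.log_rpow hC0] at this
  have hdiv : 1 - τ / ehard ≤ Real.log m / Real.log C :=
    (le_div_iff₀ hlogC).2 hlogm
  have hτe' : τ / ehard ≥ 0 := div_nonneg hτ0.le hehard0.le
  have hFlog : 1 - τ / ehard ≤ Flog m C := by
    unfold Flog
    exact le_min (by linarith) hdiv
  have hFlog1 : Flog m C ≤ 1 := min_le_left _ _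
  have heres : eres m C ehard ≤ τ := by
    unfold eres
    have h1 : 1 - Flog m C ≤ τ / ehard := by linarith
    calc (1 - Flog m C) * ehard ≤ (τ / ehard) * ehard :=
          mul_le_mul_of_nonneg_right h1 hehard0.le
      _ = τ := div_mul_cancel₀ τ hehard0.ne'
  have heres0 : 0 ≤ eres m C ehard :=
    mul_nonneg (by linarith) hehard0.le
  -- 1 - eres ≥ 1 - τ = ((1-εseq)/S)^(1/E)
  have hbase : ((1 - εseq) / S) ^ (1 / E) ≤ 1 - eres m C ehard := by
    have : ((1 - εseq) / S) ^ (1 / E) = 1 - τ := by rw [hτ]; ring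
    rw [this]; linarith
  have hbase0 : (0:ℝ) ≤ (1 - εseq) / S := div_nonneg hε.le hS0.le
  have hpow : ((1 - εseq) / S) ≤ (1 - eres m C ehard) ^ E := by
    calc (1 - εseq) / S = (((1 - εseq) / S) ^ (1 / E)) ^ E := by
          rw [← Real.rpow_mul hbase0, one_div_mul_cancel hE.ne', Real.rpow_one]
      _ ≤ (1 - eres m C ehard) ^ E :=
          Real.rpow_le_rpow (Real.rpow_nonneg hbase0 _) hbase hE.le
  calc 1 - εseq = ((1 - εseq) / S) * S := by field_simp
    _ ≤ (1 - eres m C ehard) ^ E * S :=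
        mul_le_mul_of_nonneg_right hpow hS0.le
end

section
/- Let m and C be natural numbers with 2 ≤ m ≤ C, and let H_n = ∑_{i=1}^{n} 1/i denote the n-th harmonic number. Then H_m / H_C ≥ log m / log C. In words: the cumulative head coverage of the Zipf-1 rank-frequency distribution (H_m/H_C for the top m of C modes) is at least the log-head coverage F_log(m, C) = log m / log C, so the log-head coverage form is conservative relative to Zipf-1. -/
/-!
Write `a = log m`, `A = log C`, `h = H_m`, `H = H_C`. Since `H_n - log n` decreases (it is the
sequence converging to Euler's constant from above), `H ≤ h + (A - a)`, and `a ≤ h`, `a ≤ A`.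
Hence `h A - a H ≥ h A - a (h + A - a) = (h - a)(A - a) ≥ 0`.
-/

/-- The `n`-th harmonic number `H_n = ∑_{i=1}^{n} 1/i`, as a real number. -/
noncomputable def harmonicR (n : ℕ) : ℝ := ∑ i ∈ Finset.range n, 1 / (i + 1 : ℝ)

open Real

lemma harmonicR_eq_harmonic (n : ℕ) : harmonicR n = harmonic n := by
  simp [harmonicR, harmonic]

lemma log_le_harmonicR (n : ℕ) : log n ≤ harmonicR n := by
  rw [harmonicR_eq_harmonic]
  rcases n.eq_zero_or_pos with rfl | hn
  · simp
  · calc log n ≤ log ↑(n + 1) := log_le_log (by positivity) (by push_cast; linarith)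
      _ ≤ harmonic n := log_add_one_le_harmonic n

lemma harmonicR_sub_log_le_of_le {m n : ℕ} (hm : 0 < m) (hmn : m ≤ n) :
    harmonicR n - log n ≤ harmonicR m - log m := by
  have := strictAnti_eulerMascheroniSeq'.antitone hmn
  simpa [eulerMascheroniSeq', hm.ne', (hm.trans_le hmn).ne', harmonicR_eq_harmonic] using this

lemma div_le_div_of_sub_le_sub {a A h H : ℝ} (ha : 0 ≤ a) (haA : a ≤ A) (hah : a ≤ h)
    (hA : 0 < A) (hH : 0 < H) (hsub : H - A ≤ h - a) : a / A ≤ h / H := by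
  rw [div_le_div_iff₀ hA hH]
  nlinarith [mul_nonneg (sub_nonneg.2 hah) (sub_nonneg.2 haA)]

/-- The log-head coverage form is conservative relative to Zipf-1: for
`2 ≤ m ≤ C`, the cumulative Zipf-1 head coverage `H_m / H_C` is at least the
log-head coverage `log m / log C`. -/
theorem zipf_head_ge_log_head (m C : ℕ) (hm : 2 ≤ m) (hmC : m ≤ C) :
    harmonicR m / harmonicR C ≥ Real.log m / Real.log C := by
  have hlogC : 0 < log C := log_pos (by exact_mod_cast hm.trans hmC)
  exact div_le_div_of_sub_le_sub (log_natCast_nonneg m)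
    (log_le_log (by positivity) (by exact_mod_cast hmC)) (log_le_harmonicR m) hlogC
    (hlogC.trans_le (log_le_harmonicR C)) (harmonicR_sub_log_le_of_le (by omega) hmC)
end
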